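/- arXiv:0711.1231 — 3 statements merged into one kernel-verified Lean document; each statement's English description precedes it below -/
import Mathlib

section
/- The decision version of the bi-criteria mapping problem on Fully Heterogeneous platforms (given latency threshold L and failure threshold F, does a valid mapping exist?) is NP-hard: 2-PARTITION reduces to it. Specifically, given positive integers a_1,…,a_m with sum S, there exists a subset I ⊆ {1,…,m} with Σ_{i∈I} a_i = S/2 if and only if there exists a nonempty subset I ⊆ {1,…,m} with Σ_{j∈I} a_j + 2 ≤ S/2 + 2 and e^{-Σ_{j∈I} a_j} ≤ e^{-S/2}. -/
/-!
A subset `I` meets both thresholds iff `Σ_I a ≤ S/2` (latency) and `Σ_I a ≥ S/2` (failure,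
since `exp ∘ neg` is strictly antitone), i.e. iff it is one half of a 2-partition. Nonemptiness
costs nothing: the complement of a half is again a half, and one of the two is nonempty.
-/

open Finset Real

theorem add_le_half_add_and_exp_neg_le_iff {s S : ℝ} (c : ℝ) :
    s + c ≤ S / 2 + c ∧ exp (-s) ≤ exp (-(S / 2)) ↔ 2 * s = S := by
  rw [add_le_add_iff_right, exp_le_exp, neg_le_neg_iff, ← le_antisymm_iff]
  constructor <;> intro h <;> linarith

section Partition

variable {ι : Type*} [Fintype ι] [DecidableEq ι]

theorem two_mul_sum_compl_eq_sum {a : ι → ℕ} {I : Finset ι}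
    (hI : 2 * ∑ i ∈ I, a i = ∑ i, a i) : 2 * ∑ i ∈ Iᶜ, a i = ∑ i, a i := by
  have := sum_add_sum_compl I a
  omega

theorem exists_nonempty_two_mul_sum_eq_sum [Nonempty ι] {a : ι → ℕ}
    (h : ∃ I : Finset ι, 2 * ∑ i ∈ I, a i = ∑ i, a i) :
    ∃ I : Finset ι, I.Nonempty ∧ 2 * ∑ i ∈ I, a i = ∑ i, a i := by
  obtain ⟨I, hI⟩ := h
  rcases I.eq_empty_or_nonempty with rfl | hne
  · exact ⟨∅ᶜ, by simp, two_mul_sum_compl_eq_sum hI⟩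
  · exact ⟨I, hne, hI⟩

end Partition

theorem two_partition_reduces_to_bicriteria_mapping_general
    (m : ℕ) (hm : 0 < m) (a : Fin m → ℕ) :
    (∃ I : Finset (Fin m), 2 * ∑ i ∈ I, a i = ∑ i, a i) ↔
      (∃ I : Finset (Fin m), I.Nonempty ∧
        (∑ j ∈ I, (a j : ℝ)) + 2 ≤ (∑ i, (a i : ℝ)) / 2 + 2 ∧
        Real.exp (-(∑ j ∈ I, (a j : ℝ))) ≤
          Real.exp (-((∑ i, (a i : ℝ)) / 2))) := by
  have : Nonempty (Fin m) := ⟨⟨0, hm⟩⟩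
  simp only [add_le_half_add_and_exp_neg_le_iff]
  norm_cast
  exact ⟨exists_nonempty_two_mul_sum_eq_sum, fun ⟨I, _, hI⟩ => ⟨I, hI⟩⟩

/-- the 2-PARTITION reduction. Given positive integers
`a_1,…,a_m` with sum `S`, there is a subset of sum `S/2` iff there is a
nonempty subset `I` satisfying the latency constraint
`Σ_{j∈I} a_j + 2 ≤ S/2 + 2` and the failure probability constraint
`e^{-Σ_{j∈I} a_j} ≤ e^{-S/2}` of the constructed mapping instance. -/
theorem two_partition_reduces_to_bicriteria_mapping
    (m : ℕ) (hm : 0 < m) (a : Fin m → ℕ) (ha : ∀ i, 0 < a i) :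
    (∃ I : Finset (Fin m), 2 * ∑ i ∈ I, a i = ∑ i, a i) ↔
      (∃ I : Finset (Fin m), I.Nonempty ∧
        (∑ j ∈ I, (a j : ℝ)) + 2 ≤ (∑ i, (a i : ℝ)) / 2 + 2 ∧
        Real.exp (-(∑ j ∈ I, (a j : ℝ))) ≤
          Real.exp (-((∑ i, (a i : ℝ)) / 2))) :=
  two_partition_reduces_to_bicriteria_mapping_general m hm a
end

section
/- On a Communication Homogeneous Failure Homogeneous platform, for any interval mapping with processor groups A_1,…,A_p, let k = min_j |A_j|. Then the single-interval mapping on the k fastest processors has (i) failure probability q^k ≤ 1 - ∏_{j=1}^p (1 - q^{|A_j|}) and (ii) latency k·δ_0/b + W/s_k + δ_n/b no larger than the latency of the original mapping. -/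
/-!
Let `j₀` be a group of minimal size `k`. The product `∏ j, (1 - q ^ |A_j|)` has factors in
`[0, 1]`, so it is at most its factor `1 - q ^ k` at `j₀`; this is (i). For (ii), the input
communication `k δ₀ / b` is already paid by the first interval, which has at least `k`
processors. Every group has at least `k` members, so by pigeonhole it contains a processor
no faster than each of the `k` fastest ones; hence each group's slowest speed is at most `s_k`,
and running all the work at speed `s_k` costs no more than the original computation.
-/

open Finset

lemma pow_le_one_sub_prod_one_sub_pow {ι : Type*} [Fintype ι] {q : ℝ} (hq0 : 0 ≤ q)
    (hq1 : q ≤ 1) (n : ι → ℕ) (i : ι) : q ^ n i ≤ 1 - ∏ j, (1 - q ^ n j) := by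
  have hpow_le_one (l : ℕ) : q ^ l ≤ 1 := pow_le_one₀ hq0 hq1
  have hprod : ∏ j, (1 - q ^ n j) ≤ 1 - q ^ n i := by
    simpa using prod_le_prod_of_subset_of_le_one (subset_univ {i})
      (fun j _ => sub_nonneg.2 (hpow_le_one (n j)))
      (fun j _ _ => sub_le_self _ (pow_nonneg hq0 _))
  linarith

lemma Fin.exists_mem_le_of_lt_card {m : ℕ} {A : Finset (Fin m)} {v : Fin m}
    (hv : (v : ℕ) < #A) : ∃ u ∈ A, v ≤ u := by
  by_contra! hlt
  have : #A ≤ #(Iio v) := card_le_card fun u hu => mem_Iio.2 (hlt u hu)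
  rw [Fin.card_Iio] at this
  omega

lemma Antitone.inf'_le_inf'_filter_lt {m k : ℕ} {β : Type*} [LinearOrder β] {s : Fin m → β}
    (hs : Antitone s) {A : Finset (Fin m)} (hA : A.Nonempty) (hk : k ≤ #A)
    (hne : (univ.filter fun u : Fin m => (u : ℕ) < k).Nonempty) :
    A.inf' hA s ≤ (univ.filter fun u : Fin m => (u : ℕ) < k).inf' hne s := by
  refine le_inf' _ _ fun v hv => ?_
  obtain ⟨u, huA, hvu⟩ :=
    Fin.exists_mem_le_of_lt_card (A := A) (v := v) ((mem_filter.1 hv).2.trans_le hk)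
  exact (inf'_le s huA).trans (hs hvu)

lemma sum_div_le_sum_div {ι : Type*} (t : Finset ι) {w x : ι → ℝ} {S : ℝ}
    (hw : ∀ j ∈ t, 0 ≤ w j) (hx : ∀ j ∈ t, 0 < x j) (hxS : ∀ j ∈ t, x j ≤ S) :
    (∑ j ∈ t, w j) / S ≤ ∑ j ∈ t, w j / x j := by
  rw [sum_div]
  exact sum_le_sum fun j hj => div_le_div_of_nonneg_left (hw j hj) (hx j hj) (hxS j hj)

theorem no_split_lemma_comm_hom_failure_hom_general
    (m p : ℕ) (hp : 0 < p)
    (s : Fin m → ℝ) (hs : Antitone s) (hspos : ∀ u, 0 < s u)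
    (q b δ0 δn : ℝ) (hq0 : 0 ≤ q) (hq1 : q < 1) (hb : 0 < b)
    (A : Fin p → Finset (Fin m)) (hA : ∀ j, (A j).Nonempty)
    (Wj : Fin p → ℝ) (hWj : ∀ j, 0 ≤ Wj j)
    (d : Fin p → ℝ) (hd : ∀ j, 0 ≤ d j) (hd0 : d ⟨0, hp⟩ = δ0)
    (k : ℕ) (hkmin : ∀ j, k ≤ (A j).card) (hkex : ∃ j, (A j).card = k)
    (hkne : (Finset.univ.filter fun u : Fin m => (u : ℕ) < k).Nonempty) :
    q ^ k ≤ 1 - ∏ j : Fin p, (1 - q ^ (A j).card) ∧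
      (k : ℝ) * δ0 / b +
          (∑ j, Wj j) /
            ((Finset.univ.filter fun u : Fin m => (u : ℕ) < k).inf' hkne s) +
          δn / b ≤
        (∑ j, (((A j).card : ℝ) * d j / b + Wj j / (A j).inf' (hA j) s)) +
          δn / b := by
  refine ⟨?_, ?_⟩
  · obtain ⟨j₀, hj₀⟩ := hkex
    simpa [hj₀] using pow_le_one_sub_prod_one_sub_pow hq0 hq1.le (fun j => #(A j)) j₀
  · have hcomm : (k : ℝ) * δ0 / b ≤ ∑ j, (#(A j) : ℝ) * d j / b := by
      refine le_trans ?_ (single_le_sum (fun j _ => by positivity [hd j]) (mem_univ ⟨0, hp⟩))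
      rw [← hd0]
      gcongr
      · exact hd _
      · exact_mod_cast hkmin _
    have hcomp : (∑ j, Wj j) / (univ.filter fun u : Fin m => (u : ℕ) < k).inf' hkne s ≤
        ∑ j, Wj j / (A j).inf' (hA j) s :=
      sum_div_le_sum_div _ (fun j _ => hWj j) (fun j _ => (lt_inf'_iff _).2 fun u _ => hspos u)
        (fun j _ => hs.inf'_le_inf'_filter_lt (hA j) (hkmin j) hkne)
    rw [sum_add_distrib]
    linarith

/-- on a Communication Homogeneous, Failure Homogeneous platform
(common failure probability `q`, common bandwidth `b`, speeds sorted in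
non-increasing order), for any interval mapping with processor groups
`A_1,…,A_p`, works `W_j ≥ 0`, input communication sizes `d_j ≥ 0` with
`d_1 = δ₀`, letting `k = min_j |A_j|`, the single-interval mapping on the `k`
fastest processors has
(i) failure probability `q^k ≤ 1 - ∏_j (1 - q^{|A_j|})`, and
(ii) latency `k·δ₀/b + W/s_k + δₙ/b` no larger than the latency
`Σ_j (|A_j|·d_j/b + W_j/min_{u∈A_j} s_u) + δₙ/b` of the original mapping,
where `s_k = min` speed of the `k` fastest processors. -/
theorem no_split_lemma_comm_hom_failure_hom
    (m p : ℕ) (hp : 0 < p)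
    (s : Fin m → ℝ) (hs : Antitone s) (hspos : ∀ u, 0 < s u)
    (q b δ0 δn : ℝ) (hq0 : 0 ≤ q) (hq1 : q < 1) (hb : 0 < b)
    (hδ0 : 0 ≤ δ0) (hδn : 0 ≤ δn)
    (A : Fin p → Finset (Fin m)) (hA : ∀ j, (A j).Nonempty)
    (Wj : Fin p → ℝ) (hWj : ∀ j, 0 ≤ Wj j)
    (d : Fin p → ℝ) (hd : ∀ j, 0 ≤ d j) (hd0 : d ⟨0, hp⟩ = δ0)
    (k : ℕ) (hkmin : ∀ j, k ≤ (A j).card) (hkex : ∃ j, (A j).card = k)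
    (hkne : (Finset.univ.filter fun u : Fin m => (u : ℕ) < k).Nonempty) :
    q ^ k ≤ 1 - ∏ j : Fin p, (1 - q ^ (A j).card) ∧
      (k : ℝ) * δ0 / b +
          (∑ j, Wj j) /
            ((Finset.univ.filter fun u : Fin m => (u : ℕ) < k).inf' hkne s) +
          δn / b ≤
        (∑ j, (((A j).card : ℝ) * d j / b + Wj j / (A j).inf' (hA j) s)) +
          δn / b :=
  no_split_lemma_comm_hom_failure_hom_general m p hp s hs hspos q b δ0 δn hq0 hq1 hb A hA Wj hWj d
    hd hd0 k hkmin hkex hkne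
end

section
/- The one-to-one latency minimization problem on Fully Heterogeneous platforms is NP-hard: given a complete weighted graph G = (V, E, c) with source s, tail t and bound K, there is a Hamiltonian path from s to t of cost at most K if and only if, in the constructed pipeline instance with n = |V| unit-cost stages and n unit-speed processors, bandwidths 1/c(e_{i,j}) between processors i and j, bandwidth 1 on (in,s) and (t,out), and bandwidth below 1/(K+n+3) on all other in/out links, there is a one-to-one mapping of latency at most K + n + 2. -/
/-- Cost of the Hamiltonian path `π 0, π 1, …, π n` in the complete graph on
`n+1` vertices with edge costs `c`. -/
noncomputable def hamCost (n : ℕ) (c : Fin (n + 1) → Fin (n + 1) → ℝ)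
    (π : Equiv.Perm (Fin (n + 1))) : ℝ :=
  ∑ i : Fin n, c (π i.castSucc) (π i.succ)

/-- Latency of the one-to-one mapping `π` in the instance built from a TSP
instance: `n+1` unit-cost stages on `n+1` unit-speed processors, bandwidth
`1/c(i,j)` between processors `i` and `j`, bandwidth `1` on `(in,s)` and
`(t,out)`, and slow bandwidth `ε` on the other in/out links. -/
noncomputable def ooLatency (n : ℕ) (c : Fin (n + 1) → Fin (n + 1) → ℝ)
    (s t : Fin (n + 1)) (ε : ℝ) (π : Equiv.Perm (Fin (n + 1))) : ℝ :=
  (if π 0 = s then 1 else 1 / ε) + (n + 1) + hamCost n c π +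
    (if π (Fin.last n) = t then 1 else 1 / ε)

/-- reduction from TSP. There is a Hamiltonian path from `s` to
`t` of cost at most `K` iff the constructed one-to-one latency minimization
instance admits a mapping of latency at most `K + (n+1) + 2`, where the slow
in/out links have bandwidth `ε < 1/(K + (n+1) + 3)`. -/
theorem tsp_reduces_to_one_to_one_latency
    (n : ℕ) (c : Fin (n + 1) → Fin (n + 1) → ℝ) (hc : ∀ i j, 0 ≤ c i j)
    (s t : Fin (n + 1)) (K : ℝ) (hK : 0 ≤ K)
    (ε : ℝ) (hε : 0 < ε) (hεsmall : ε < 1 / (K + (n + 1) + 3)) :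
    (∃ π : Equiv.Perm (Fin (n + 1)),
        π 0 = s ∧ π (Fin.last n) = t ∧ hamCost n c π ≤ K) ↔
      (∃ π : Equiv.Perm (Fin (n + 1)),
        ooLatency n c s t ε π ≤ K + (n + 1) + 2) := by
  have hn : (0:ℝ) ≤ (n:ℝ) := Nat.cast_nonneg n
  have hD : (0:ℝ) < K + (n + 1) + 3 := by linarith
  have hinv : K + (n + 1) + 3 < 1 / ε := by
    rw [lt_div_iff₀ hε]
    calc (K + (n + 1) + 3) * ε < (K + (n + 1) + 3) * (1 / (K + (n + 1) + 3)) := by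
          exact mul_lt_mul_of_pos_left hεsmall hD
      _ = 1 := mul_one_div_cancel (ne_of_gt hD)
  constructor
  · rintro ⟨π, h0, hl, hcost⟩
    refine ⟨π, ?_⟩
    simp only [ooLatency, h0, hl, if_true]
    linarith
  · rintro ⟨π, hlat⟩
    have hham : 0 ≤ hamCost n c π :=
      Finset.sum_nonneg fun i _ => hc _ _
    unfold ooLatency at hlat
    have h1 : (0:ℝ) < 1 := one_pos
    by_cases h0 : π 0 = s
    · by_cases hl : π (Fin.last n) = t
      · refine ⟨π, h0, hl, ?_⟩
        rw [if_pos h0, if_pos hl] at hlat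
        linarith
      · rw [if_pos h0, if_neg hl] at hlat
        linarith
    · rw [if_neg h0] at hlat
      have : (0:ℝ) < if π (Fin.last n) = t then 1 else 1 / ε := by
        split <;> [exact one_pos; exact one_div_pos.mpr hε]
      linarith
end
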